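/- Let g : ℂ → ℂ be holomorphic on all of ℂ, let D ⊆ ℂ be a bounded open set and U ⊆ ℂ an open set with μ(U) > 0 and with closure(U) ⊆ g(D). Set E = {z ∈ D : g(z) ∈ U}. Assume there are constants M > 0, c > 0 and p ∈ ℕ such that: |g′(z)| ≤ M for all z ∈ D; |g′(z)| ≥ c for all z ∈ D \ E; and every w ∈ ℂ has at most p preimages under g in D. Then μ(D) ≤ μ(E) · (1 + p M² μ(g(D)) / (c² μ(U))). In particular μ(E) ≥ C μ(D) with the constant C = (1 + p M² μ(g(D))/(c² μ(U)))^{−1} > 0 depending only on U, p, M, c and μ(g(D)), and not on the particular set D. -/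

import Mathlib

/-! Change of variables gives `μ U ≤ μ (g '' E) ≤ M² μ E`. Off `E` the derivative is bounded
below, so `g` is locally injective there: cutting `D \ E` into countably many disjoint measurable
pieces on which `g` is injective, change of variables gives `c² μ B ≤ μ (g '' B)` on each piece,
and since the images cover each point at most `p` times, `c² μ (D \ E) ≤ p μ (g '' D)`.
Adding `μ E` to this gives the bound. -/

open MeasureTheory Set ENNReal Function

lemma abs_det_restrictScalars_toSpanSingleton (a : ℂ) :
    |((ContinuousLinearMap.toSpanSingleton ℂ a).restrictScalars ℝ).det| = ‖a‖ ^ 2 := by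
  have hmul : (((ContinuousLinearMap.toSpanSingleton ℂ a).restrictScalars ℝ :
      ℂ →L[ℝ] ℂ) : ℂ →ₗ[ℝ] ℂ) = Algebra.lmul ℝ ℂ a := by
    ext w
    simp [mul_comm]
  rw [ContinuousLinearMap.det, hmul, ← Algebra.norm_apply, Algebra.norm_complex_apply,
    abs_of_nonneg (Complex.normSq_nonneg a), Complex.normSq_eq_norm_sq]

section Jacobian

variable {g g' : ℂ → ℂ} {s : Set ℂ}

lemma volume_image_le_of_norm_deriv_le (hs : MeasurableSet s)
    (hg : ∀ z ∈ s, HasDerivWithinAt g (g' z) s z) {M : ℝ} (hM : ∀ z ∈ s, ‖g' z‖ ≤ M) :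
    volume (g '' s) ≤ ENNReal.ofReal (M ^ 2) * volume s :=
  calc volume (g '' s)
      ≤ ∫⁻ z in s, ENNReal.ofReal (‖g' z‖ ^ 2) := by
        simpa only [ContinuousLinearMap.smulRight_one_eq_toSpanSingleton,
          abs_det_restrictScalars_toSpanSingleton] using
          addHaar_image_le_lintegral_abs_det_fderiv volume hs
            fun z hz => (hg z hz).hasFDerivWithinAt.restrictScalars ℝ
    _ ≤ ∫⁻ _ in s, ENNReal.ofReal (M ^ 2) :=
        setLIntegral_mono measurable_const fun z hz =>
          ENNReal.ofReal_le_ofReal (pow_le_pow_left₀ (norm_nonneg _) (hM z hz) 2)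
    _ = ENNReal.ofReal (M ^ 2) * volume s := setLIntegral_const _ _

lemma ofReal_sq_mul_volume_le_volume_image (hs : MeasurableSet s)
    (hg : ∀ z ∈ s, HasDerivWithinAt g (g' z) s z) (hinj : InjOn g s) {c : ℝ} (hc : 0 ≤ c)
    (hc' : ∀ z ∈ s, c ≤ ‖g' z‖) :
    ENNReal.ofReal (c ^ 2) * volume s ≤ volume (g '' s) :=
  calc ENNReal.ofReal (c ^ 2) * volume s
      = ∫⁻ _ in s, ENNReal.ofReal (c ^ 2) := (setLIntegral_const _ _).symm
    _ ≤ ∫⁻ z in s, ENNReal.ofReal (‖g' z‖ ^ 2) :=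
        setLIntegral_mono' hs fun z hz =>
          ENNReal.ofReal_le_ofReal (pow_le_pow_left₀ hc (hc' z hz) 2)
    _ ≤ volume (g '' s) := by
        simpa only [ContinuousLinearMap.smulRight_one_eq_toSpanSingleton,
          abs_det_restrictScalars_toSpanSingleton] using
          lintegral_abs_det_fderiv_le_addHaar_image volume hs
            (fun z hz => (hg z hz).hasFDerivWithinAt.restrictScalars ℝ) hinj

end Jacobian

lemma HasStrictDerivAt.exists_isOpen_injOn {𝕜 : Type*} [NontriviallyNormedField 𝕜]
    [CompleteSpace 𝕜] {f : 𝕜 → 𝕜} {f' a : 𝕜} (hf : HasStrictDerivAt f f' a) (hf' : f' ≠ 0) :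
    ∃ t, IsOpen t ∧ a ∈ t ∧ InjOn f t := by
  have H := hf.hasStrictFDerivAt_equiv hf'
  refine ⟨(H.toOpenPartialHomeomorph f).source, (H.toOpenPartialHomeomorph f).open_source,
    H.mem_toOpenPartialHomeomorph_source, ?_⟩
  simpa only [H.toOpenPartialHomeomorph_coe] using (H.toOpenPartialHomeomorph f).injOn

lemma exists_measurable_disjoint_cover_injOn {α β : Type*} [TopologicalSpace α]
    [SecondCountableTopology α] [MeasurableSpace α] [OpensMeasurableSpace α] {f : α → β}
    {A : Set α} (hA : MeasurableSet A) (hloc : ∀ z ∈ A, ∃ t, IsOpen t ∧ z ∈ t ∧ InjOn f t) :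
    ∃ B : ℕ → Set α, (∀ n, MeasurableSet (B n)) ∧ Pairwise (Disjoint on B) ∧
      (⋃ n, B n) = A ∧ ∀ n, InjOn f (B n) := by
  let ι := {t : Set α // IsOpen t ∧ InjOn f t}
  have : Nonempty ι := ⟨⟨∅, isOpen_empty, injOn_empty f⟩⟩
  have hcover : A ⊆ ⋃ i : ι, i.1 := fun z hz =>
    let ⟨t, hto, hzt, hinj⟩ := hloc z hz
    mem_iUnion.2 ⟨⟨t, hto, hinj⟩, hzt⟩
  obtain ⟨u, hu⟩ := (HereditarilyLindelofSpace.isLindelof A).indexed_countable_subcover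
    (fun i : ι => i.1) (fun i => i.2.1) hcover
  refine ⟨fun n => A ∩ disjointed (fun n => (u n).1) n, fun n => ?_, fun m n hmn => ?_, ?_,
    fun n => ?_⟩
  · exact hA.inter (.disjointed (fun n => (u n).2.1.measurableSet) n)
  · exact (disjoint_disjointed _ hmn).mono inter_subset_right inter_subset_right
  · rw [← inter_iUnion, iUnion_disjointed, inter_eq_left.2 hu]
  · exact (u n).2.2.mono (inter_subset_right.trans (disjointed_subset _ n))

section Multiplicity

variable {α β ι : Type*} {f : α → β} {D : Set α} {B : ι → Set α}

lemma encard_setOf_mem_image_le (hBD : ∀ i, B i ⊆ D) (hdisj : Pairwise (Disjoint on B))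
    (w : β) : {i | w ∈ f '' B i}.encard ≤ (D ∩ f ⁻¹' {w}).encard := by
  rcases {i | w ∈ f '' B i}.eq_empty_or_nonempty with hS | ⟨i, z, -⟩
  · rw [hS, encard_empty]
    exact zero_le
  have : Nonempty α := ⟨z⟩
  choose! z hzB hzw using fun i (hi : w ∈ f '' B i) => hi
  refine encard_le_encard_of_injOn (f := z) (fun i hi => ⟨hBD i (hzB i hi), hzw i hi⟩) ?_
  intro i hi j hj hij
  by_contra hne
  exact disjoint_left.1 (hdisj hne) (hzB i hi) (hij ▸ hzB j hj)

lemma tsum_indicator_image_le_encard (hBD : ∀ i, B i ⊆ D) (hdisj : Pairwise (Disjoint on B))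
    (w : β) : ∑' i, (f '' B i).indicator 1 w ≤ ((D ∩ f ⁻¹' {w}).encard : ℝ≥0∞) := by
  calc ∑' i, (f '' B i).indicator 1 w
      = ∑' _ : {i | w ∈ f '' B i}, (1 : ℝ≥0∞) := (tsum_subtype {i | w ∈ f '' B i} 1).symm
    _ = {i | w ∈ f '' B i}.encard := ENNReal.tsum_set_one _
    _ ≤ (D ∩ f ⁻¹' {w}).encard := by
        exact_mod_cast encard_setOf_mem_image_le hBD hdisj w

lemma tsum_measure_image_le_mul [Countable ι] [MeasurableSpace β] (μ : Measure β) {p : ℕ}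
    (hp : ∀ w, (D ∩ f ⁻¹' {w}).encard ≤ p) (hBD : ∀ i, B i ⊆ D)
    (hdisj : Pairwise (Disjoint on B)) (hmeas : ∀ i, MeasurableSet (f '' B i)) :
    ∑' i, μ (f '' B i) ≤ p * μ (f '' D) := by
  have hpt : ∀ w, ∑' i, (f '' B i).indicator 1 w ≤
      (f '' D).indicator (fun _ => (p : ℝ≥0∞)) w := by
    intro w
    by_cases hw : w ∈ f '' D
    · rw [indicator_of_mem hw]
      exact (tsum_indicator_image_le_encard hBD hdisj w).trans (by exact_mod_cast hp w)
    · have hw' : ∀ i, w ∉ f '' B i := fun i h => hw (image_mono (hBD i) h)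
      simp [hw, hw']
  calc ∑' i, μ (f '' B i)
      = ∑' i, ∫⁻ w, (f '' B i).indicator 1 w ∂μ := by
        simp only [lintegral_indicator_one (hmeas _)]
    _ = ∫⁻ w, ∑' i, (f '' B i).indicator 1 w ∂μ :=
        (lintegral_tsum fun i => (measurable_one.indicator (hmeas i)).aemeasurable).symm
    _ ≤ ∫⁻ w, (f '' D).indicator (fun _ => (p : ℝ≥0∞)) w ∂μ := lintegral_mono hpt
    _ ≤ p * μ (f '' D) := lintegral_indicator_const_le _ _

end Multiplicity

lemma ofReal_sq_mul_volume_le_mul_volume_image {g g' : ℂ → ℂ} {A D : Set ℂ} {c : ℝ} {p : ℕ}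
    (hA : MeasurableSet A) (hAD : A ⊆ D) (hg : ∀ z ∈ A, HasStrictDerivAt g (g' z) z)
    (hc : 0 < c) (hc' : ∀ z ∈ A, c ≤ ‖g' z‖) (hp : ∀ w, (D ∩ g ⁻¹' {w}).encard ≤ p) :
    ENNReal.ofReal (c ^ 2) * volume A ≤ p * volume (g '' D) := by
  have hloc : ∀ z ∈ A, ∃ t, IsOpen t ∧ z ∈ t ∧ InjOn g t := fun z hz =>
    (hg z hz).exists_isOpen_injOn (norm_pos_iff.1 (hc.trans_le (hc' z hz)))
  obtain ⟨B, hBm, hdisj, hBA, hinj⟩ := exists_measurable_disjoint_cover_injOn hA hloc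
  have hBsub : ∀ n, B n ⊆ A := fun n => hBA ▸ subset_iUnion B n
  calc ENNReal.ofReal (c ^ 2) * volume A
      ≤ ∑' n, ENNReal.ofReal (c ^ 2) * volume (B n) := by
        rw [ENNReal.tsum_mul_left, ← hBA]
        gcongr
        exact measure_iUnion_le B
    _ ≤ ∑' n, volume (g '' B n) := ENNReal.tsum_le_tsum fun n =>
        ofReal_sq_mul_volume_le_volume_image (hBm n)
          (fun z hz => (hg z (hBsub n hz)).hasDerivAt.hasDerivWithinAt) (hinj n) hc.le
          (fun z hz => hc' z (hBsub n hz))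
    _ ≤ p * volume (g '' D) := tsum_measure_image_le_mul volume hp
        (fun n => (hBsub n).trans hAD) hdisj fun n => (hBm n).image_of_continuousOn_injOn
          (fun z hz => (hg z (hBsub n hz)).hasDerivAt.continuousAt.continuousWithinAt) (hinj n)

lemma le_one_add_div_mul_of_le {d e a u m M c p : ℝ} (hu : 0 < u) (hc : 0 < c)
    (hpm : 0 ≤ p * m) (huM : u ≤ M ^ 2 * e) (hca : c ^ 2 * a ≤ p * m) (hd : d ≤ e + a) :
    d ≤ (1 + p * M ^ 2 * m / (c ^ 2 * u)) * e := by
  have ha : a * (c ^ 2 * u) ≤ p * M ^ 2 * m * e := by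
    nlinarith [mul_le_mul_of_nonneg_right hca hu.le, mul_le_mul_of_nonneg_left huM hpm]
  have ha' : a ≤ p * M ^ 2 * m / (c ^ 2 * u) * e := by
    rwa [div_mul_eq_mul_div, le_div_iff₀ (by positivity)]
  linarith

lemma ENNReal.le_ofReal_one_add_div_mul_of_le {d e a u m : ℝ≥0∞} {M c : ℝ} {p : ℕ}
    (hc : 0 < c) (hu0 : u ≠ 0) (hu : u ≠ ⊤) (hm : m ≠ ⊤) (huM : u ≤ ENNReal.ofReal (M ^ 2) * e)
    (hca : ENNReal.ofReal (c ^ 2) * a ≤ p * m) (hd : d ≤ e + a) :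
    d ≤ ENNReal.ofReal (1 + p * M ^ 2 * m.toReal / (c ^ 2 * u.toReal)) * e := by
  have hpm : (p : ℝ≥0∞) * m ≠ ⊤ := mul_ne_top (natCast_ne_top p) hm
  have ha : a ≠ ⊤ := fun h => ne_top_of_le_ne_top hpm hca
    (mul_eq_top.2 (Or.inl ⟨(ofReal_pos.2 (by positivity)).ne', h⟩))
  rcases eq_or_ne e ⊤ with rfl | he
  · rw [mul_top (ofReal_pos.2 (by positivity)).ne']
    exact le_top
  have hd' : d ≠ ⊤ := ne_top_of_le_ne_top (add_ne_top.2 ⟨he, ha⟩) hd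
  rw [← ofReal_toReal hd', ← ofReal_toReal he, ← ofReal_mul (by positivity)]
  refine ofReal_le_ofReal <| le_one_add_div_mul_of_le (a := a.toReal) (toReal_pos hu0 hu) hc
    (by positivity) ?_ ?_ ?_
  · simpa [toReal_mul, toReal_ofReal (sq_nonneg M)] using
      toReal_mono (mul_ne_top ofReal_ne_top he) huM
  · simpa [toReal_mul, toReal_ofReal (sq_nonneg c)] using toReal_mono hpm hca
  · simpa [toReal_add he ha] using toReal_mono (add_ne_top.2 ⟨he, ha⟩) hd

theorem definite_fraction_enters_U_general (g : ℂ → ℂ) (D U : Set ℂ) (M c : ℝ) (p : ℕ)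
    (hg : Differentiable ℂ g)
    (hD : IsOpen D) (hDb : Bornology.IsBounded D)
    (hU : IsOpen U) (hUpos : 0 < volume U)
    (hcl : closure U ⊆ g '' D)
    (hc : 0 < c)
    (hup : ∀ z ∈ D, ‖deriv g z‖ ≤ M)
    (hlow : ∀ z ∈ D \ {z ∈ D | g z ∈ U}, c ≤ ‖deriv g z‖)
    (hp : ∀ w : ℂ, (D ∩ g ⁻¹' {w}).encard ≤ (p : ℕ∞)) :
    volume D ≤
      ENNReal.ofReal (1 + (p : ℝ) * M ^ 2 * (volume (g '' D)).toReal /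
          (c ^ 2 * (volume U).toReal)) *
        volume {z ∈ D | g z ∈ U} := by
  set E := {z ∈ D | g z ∈ U}
  have hE : MeasurableSet E := (hD.inter (hU.preimage hg.continuous)).measurableSet
  have hUE : U ⊆ g '' E := fun w hw =>
    let ⟨z, hzD, hzw⟩ := hcl (subset_closure hw)
    ⟨z, ⟨hzD, hzw ▸ hw⟩, hzw⟩
  have hgD : volume (g '' D) ≠ ⊤ :=
    ((hDb.isCompact_closure.image hg.continuous).isBounded.subset
      (image_mono subset_closure)).measure_lt_top.ne
  have hUM : volume U ≤ ENNReal.ofReal (M ^ 2) * volume E :=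
    (measure_mono hUE).trans <| volume_image_le_of_norm_deriv_le hE
      (fun z _ => (hg z).hasDerivAt.hasDerivWithinAt) fun z hz => hup z hz.1
  have hDE : ENNReal.ofReal (c ^ 2) * volume (D \ E) ≤ p * volume (g '' D) :=
    ofReal_sq_mul_volume_le_mul_volume_image (hD.measurableSet.diff hE) sdiff_subset
      (fun z _ => (hg.analyticAt z).hasStrictDerivAt) hc hlow hp
  refine ENNReal.le_ofReal_one_add_div_mul_of_le hc hUpos.ne'
    (ne_top_of_le_ne_top hgD (measure_mono (subset_closure.trans hcl))) hgD hUM hDE ?_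
  calc volume D ≤ volume (D ∩ E) + volume (D \ E) := measure_le_inter_add_sdiff _ _ _
    _ = volume E + volume (D \ E) := by rw [inter_eq_right.2 fun z hz => hz.1]

/-- Planar quantitative version of Lemma 5.2 (unimeas): if `closure U ⊆ g(D)`,
`|g′| ≤ M` on `D`, `|g′| ≥ c` on `D \ E` where `E = {z ∈ D : g z ∈ U}`, and every point
has at most `p` preimages under `g` in `D`, then
`μ(D) ≤ μ(E) (1 + p M² μ(g(D)) / (c² μ(U)))`. -/
theorem definite_fraction_enters_U (g : ℂ → ℂ) (D U : Set ℂ) (M c : ℝ) (p : ℕ)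
    (hg : Differentiable ℂ g)
    (hD : IsOpen D) (hDb : Bornology.IsBounded D)
    (hU : IsOpen U) (hUpos : 0 < volume U)
    (hcl : closure U ⊆ g '' D)
    (hM : 0 < M) (hc : 0 < c)
    (hup : ∀ z ∈ D, ‖deriv g z‖ ≤ M)
    (hlow : ∀ z ∈ D \ {z ∈ D | g z ∈ U}, c ≤ ‖deriv g z‖)
    (hp : ∀ w : ℂ, (D ∩ g ⁻¹' {w}).encard ≤ (p : ℕ∞)) :
    volume D ≤
      ENNReal.ofReal (1 + (p : ℝ) * M ^ 2 * (volume (g '' D)).toReal /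
          (c ^ 2 * (volume U).toReal)) *
        volume {z ∈ D | g z ∈ U} :=
  definite_fraction_enters_U_general g D U M c p hg hD hDb hU hUpos hcl hc hup hlow hp
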